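/- The cosets Ham_d^i = {x + e_i : x ∈ Ham_d} for i = 0,1,…,2^d−1 (with e_0 = 0 and e_i the i-th standard basis vector) are pairwise disjoint and their union is all of {0,1}^{2^d−1}; i.e., the Hamming code is a perfect code. -/

import Mathlib

open Finset

/-- The parity-check matrix of the Hamming code: the `j`-th column is the binary
representation of `j+1` (columns are indexed by `1,…,2^d−1`). -/
def hammingMatrix (d : ℕ) (i : Fin d) (j : Fin (2 ^ d - 1)) : ZMod 2 :=
  if Nat.testBit ((j : ℕ) + 1) (i : ℕ) then 1 else 0

/-- Membership in the Hamming code of length `2^d − 1`. -/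
def inHam (d : ℕ) (x : Fin (2 ^ d - 1) → ZMod 2) : Prop :=
  ∀ i : Fin d, ∑ j, hammingMatrix d i j * x j = 0

/-- `e_i` for `i ∈ {0,…,2^d−1}`: `e_0 = 0` and otherwise the standard basis vector
with a `1` in the coordinate indexed by `i` (coordinates are labelled `1,…,2^d−1`). -/
def unitVec (d : ℕ) (i : Fin (2 ^ d)) (j : Fin (2 ^ d - 1)) : ZMod 2 :=
  if (j : ℕ) + 1 = (i : ℕ) then 1 else 0

/-!
A vector `y` lies in the coset `Ham_d + e_i` exactly when its syndrome `H y` equals `H e_i`,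
the `i`-th column of `H` (or `0` for `i = 0`), i.e. the binary expansion of `i`. Since binary
expansion is a bijection from `{0, …, 2^d − 1}` onto `GF(2)^d`, exactly one `i` matches `H y`.
-/

open Matrix

def hammingCheck (d : ℕ) : Matrix (Fin d) (Fin (2 ^ d - 1)) (ZMod 2) := Matrix.of (hammingMatrix d)

theorem inHam_iff_mulVec_eq_zero {d : ℕ} {x : Fin (2 ^ d - 1) → ZMod 2} :
    inHam d x ↔ hammingCheck d *ᵥ x = 0 :=
  funext_iff.symm

theorem Matrix.exists_mulVec_eq_zero_and_eq_add_iff {m n R : Type*} [Fintype n] [Ring R]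
    (M : Matrix m n R) (y e : n → R) :
    (∃ x, M *ᵥ x = 0 ∧ y = x + e) ↔ M *ᵥ y = M *ᵥ e := by
  constructor
  · rintro ⟨x, hx, rfl⟩
    rw [mulVec_add, hx, zero_add]
  · intro h
    exact ⟨y - e, by rw [mulVec_sub, h, sub_self], (sub_add_cancel y e).symm⟩

/-- `ZMod 2` is `Fin 2` by definition, so this is the base-2 digit expansion. -/
def binaryDigits (d : ℕ) : Fin (2 ^ d) ≃ (Fin d → ZMod 2) := finFunctionFinEquiv.symm

theorem binaryDigits_apply (d : ℕ) (i : Fin (2 ^ d)) (k : Fin d) :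
    binaryDigits d i k = if Nat.testBit i k then 1 else 0 := by
  have hval : (binaryDigits d i k).val = i / 2 ^ (k : ℕ) % 2 := rfl
  rw [Nat.testBit_eq_decide_div_mod_eq, ← hval]
  generalize binaryDigits d i k = b
  fin_cases b <;> rfl

theorem unitVec_zero (d : ℕ) : unitVec d 0 = 0 := by
  ext j
  simp [unitVec]

theorem unitVec_eq_single {d : ℕ} (i : Fin (2 ^ d)) (j : Fin (2 ^ d - 1))
    (hij : (j : ℕ) + 1 = i) : unitVec d i = Pi.single j 1 := by
  ext j'
  simp only [unitVec, Pi.single_apply, ← hij, Nat.add_right_cancel_iff, Fin.val_inj]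

theorem hammingCheck_mulVec_unitVec (d : ℕ) (i : Fin (2 ^ d)) :
    hammingCheck d *ᵥ unitVec d i = binaryDigits d i := by
  ext k
  rw [binaryDigits_apply]
  obtain rfl | hi := eq_or_ne i 0
  · simp [unitVec_zero]
  · have hi0 : (i : ℕ) ≠ 0 := fun h => hi (Fin.ext h)
    have hj : (i : ℕ) - 1 < 2 ^ d - 1 := by have := i.isLt; omega
    have hij : (i : ℕ) - 1 + 1 = i := by omega
    rw [unitVec_eq_single i ⟨_, hj⟩ hij, mulVec_single_one]
    simp [hammingCheck, hammingMatrix, hij]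

theorem hamming_perfect (d : ℕ) (y : Fin (2 ^ d - 1) → ZMod 2) :
    ∃! i : Fin (2 ^ d), ∃ x, inHam d x ∧ y = x + unitVec d i := by
  simp only [inHam_iff_mulVec_eq_zero, exists_mulVec_eq_zero_and_eq_add_iff,
    hammingCheck_mulVec_unitVec, eq_comm (a := hammingCheck d *ᵥ y)]
  exact (binaryDigits d).bijective.existsUnique _
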